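/- Let I ≥ 2 be an integer and S > 0 a real number. Define χ : [0,1) → ℝ by χ(ρ) = ((1+(I−1)ρ)(1−ρ)^{I−1})^{−1/2} · exp(−I·S·ρ/(2(1−ρ))), and when S < (√I−1)/(√I+1) set ρ̂ = (1/2)(1−S)·(1 + √(1 − 4S/((I−1)(1−S)²))). Then: if S ≥ (√I−1)/(√I+1), the supremum of χ(ρ) over ρ ∈ (0,1) equals 1; and if S < (√I−1)/(√I+1), then ρ̂ ∈ (0,1) and the supremum of χ(ρ) over ρ ∈ (0,1) equals max{χ(ρ̂), 1}. -/

import Mathlib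

/-!
On `[0, 1)`, `χ = exp ∘ logChi I S` and the derivative of `logChi I S` is `chiQuad I S` times a
positive factor, where `chiQuad I S` is a concave quadratic with
`4 · chiQuad I S ρ = chiDisc I S - 4 (I - 1) (ρ - (1 - S) / 2)²`. The threshold
`T = (√I - 1) / (√I + 1)` is the root of `chiDisc I` in `(0, 1)`. If `S ≥ T`, the quadratic is
nonpositive on `[0, 1)`, so `χ ≤ χ(0) = 1`. If `S < T`, it has roots `0 < ρ₁ ≤ ρ̂ < 1`, so `χ`
decreases, increases up to `ρ̂` and decreases again, whence `χ ≤ max (χ ρ̂) 1`. Since `χ` is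
continuous at `0`, the value `1` lies in the closure of `χ '' (0, 1)`, so in both cases the bound
is the supremum.
-/

open Real Set

/-- The likelihood ratio factor `χ(ρ)` for an ANOVA study with `I` cells and
normalized within-group sum of squares `S`. -/
noncomputable def chiFun (I : ℕ) (S ρ : ℝ) : ℝ :=
  ((1 + ((I : ℝ) - 1) * ρ) * (1 - ρ) ^ (I - 1)) ^ (-(1 : ℝ) / 2) *
    Real.exp (-((I : ℝ) * S * ρ) / (2 * (1 - ρ)))

/-- The candidate maximizer `ρ̂`. -/
noncomputable def rhoHat (I : ℕ) (S : ℝ) : ℝ :=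
  (1 / 2) * (1 - S) * (1 + Real.sqrt (1 - 4 * S / (((I : ℝ) - 1) * (1 - S) ^ 2)))

lemma csSup_eq_of_mem_upperBounds_of_mem_closure {α : Type*} [ConditionallyCompleteLinearOrder α]
    [TopologicalSpace α] [OrderTopology α] {s : Set α} {a : α} (ha : a ∈ upperBounds s)
    (hcl : a ∈ closure s) : sSup s = a :=
  (isLUB_of_mem_closure ha hcl).csSup_eq (closure_nonempty_iff.1 ⟨a, hcl⟩)

lemma le_max_of_antitoneOn_of_monotoneOn_of_antitoneOn {α β : Type*} [LinearOrder α]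
    [LinearOrder β] {f : α → β} {a b c d x : α} (h₁ : AntitoneOn f (Icc a b))
    (h₂ : MonotoneOn f (Icc b c)) (h₃ : AntitoneOn f (Icc c d)) (hx : x ∈ Icc a d) :
    f x ≤ max (f a) (f c) := by
  rcases le_total x b with hxb | hbx
  · exact (h₁ ⟨le_rfl, hx.1.trans hxb⟩ ⟨hx.1, hxb⟩ hx.1).trans (le_max_left _ _)
  rcases le_total x c with hxc | hcx
  · exact (h₂ ⟨hbx, hxc⟩ ⟨hbx.trans hxc, le_rfl⟩ hxc).trans (le_max_right _ _)
  · exact (h₃ ⟨le_rfl, hcx.trans hx.2⟩ ⟨hcx, hx.2⟩ hcx).trans (le_max_right _ _)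

noncomputable def logChi (I : ℕ) (S ρ : ℝ) : ℝ :=
  -(1 / 2) * log (1 + ((I : ℝ) - 1) * ρ) - ((I : ℝ) - 1) / 2 * log (1 - ρ)
    - I * S * ρ / (2 * (1 - ρ))

noncomputable def chiQuad (I : ℕ) (S ρ : ℝ) : ℝ :=
  ((I : ℝ) - 1) * ρ * (1 - ρ) - S * (1 + ((I : ℝ) - 1) * ρ)

noncomputable def chiDisc (I : ℕ) (S : ℝ) : ℝ :=
  ((I : ℝ) - 1) * (1 - S) ^ 2 - 4 * S

section

variable {I : ℕ} {S ρ ρ₁ ρ₂ t x y : ℝ}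

variable (I S t) in
lemma four_mul_chiQuad :
    4 * chiQuad I S t = chiDisc I S - 4 * ((I : ℝ) - 1) * (t - (1 - S) / 2) ^ 2 := by
  unfold chiQuad chiDisc
  ring

variable (I) in
lemma chiDisc_threshold : chiDisc I ((√I - 1) / (√I + 1)) = 0 := by
  have hsq : √(I : ℝ) ^ 2 = I := sq_sqrt (Nat.cast_nonneg I)
  have hne : √(I : ℝ) + 1 ≠ 0 := by positivity
  unfold chiDisc
  field_simp
  linear_combination -4 * hsq

variable (I) in
lemma threshold_lt_one : (√I - 1) / (√I + 1) < 1 :=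
  (div_lt_one (by positivity)).2 (by linarith)

lemma chiQuad_nonpos_of_threshold_le (hI : 1 ≤ I) (hT : (√I - 1) / (√I + 1) ≤ S)
    (ht : 0 ≤ t) : chiQuad I S t ≤ 0 := by
  set T := (√(I : ℝ) - 1) / (√I + 1)
  have hI' : (0 : ℝ) ≤ I - 1 := sub_nonneg.2 (Nat.one_le_cast.2 hI)
  have hT_quad := four_mul_chiQuad I T t
  rw [chiDisc_threshold] at hT_quad
  have hdiff : chiQuad I S t = chiQuad I T t - (S - T) * (1 + ((I : ℝ) - 1) * t) := by
    unfold chiQuad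
    ring
  linarith [mul_nonneg (sub_nonneg.2 hT) (by positivity : (0 : ℝ) ≤ 1 + ((I : ℝ) - 1) * t),
    mul_nonneg hI' (sq_nonneg (t - (1 - T) / 2))]

lemma chiDisc_pos_of_lt_threshold (hI : 1 ≤ I) (hT : S < (√I - 1) / (√I + 1)) :
    0 < chiDisc I S := by
  set T := (√(I : ℝ) - 1) / (√I + 1)
  have hI' : (0 : ℝ) ≤ I - 1 := sub_nonneg.2 (Nat.one_le_cast.2 hI)
  have hT1 : T < 1 := threshold_lt_one I
  have hdiff : chiDisc I S = chiDisc I T + (T - S) * (((I : ℝ) - 1) * (2 - S - T) + 4) := by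
    unfold chiDisc
    ring
  rw [hdiff, chiDisc_threshold, zero_add]
  exact mul_pos (sub_pos.2 hT) (by nlinarith)

lemma exists_chiQuad_eq_neg_mul_rhoHat (hS : 0 < S) (hS1 : S < 1) (hD : 0 < chiDisc I S) :
    ∃ ρ₁, 0 < ρ₁ ∧ ρ₁ ≤ rhoHat I S ∧ rhoHat I S < 1 ∧
      ∀ t, chiQuad I S t = -((I : ℝ) - 1) * (t - ρ₁) * (t - rhoHat I S) := by
  have hden : 4 * S < ((I : ℝ) - 1) * (1 - S) ^ 2 := by unfold chiDisc at hD; linarith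
  set u := 4 * S / (((I : ℝ) - 1) * (1 - S) ^ 2)
  have hu0 : 0 < u := div_pos (by positivity) (by linarith)
  have hu1 : u < 1 := (div_lt_one (by linarith)).2 hden
  have hu_mul : u * (((I : ℝ) - 1) * (1 - S) ^ 2) = 4 * S := div_mul_cancel₀ _ (by linarith)
  set r := √(1 - u)
  have hr_sq : r ^ 2 = 1 - u := sq_sqrt (by linarith)
  have hr0 : 0 ≤ r := sqrt_nonneg _
  have hr1 : r < 1 := by nlinarith
  have hhat : rhoHat I S = (1 - S) * (1 + r) / 2 := by
    change 1 / 2 * (1 - S) * (1 + r) = _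
    ring
  refine ⟨(1 - S) * (1 - r) / 2, by nlinarith, by rw [hhat]; nlinarith, by rw [hhat]; nlinarith,
    fun t => ?_⟩
  rw [hhat]
  unfold chiQuad
  linear_combination (1 / 4) * hu_mul - (((I : ℝ) - 1) * (1 - S) ^ 2 / 4) * hr_sq

variable (I) in
lemma one_add_pred_mul_pos (h0 : 0 ≤ ρ) (h1 : ρ < 1) : 0 < 1 + ((I : ℝ) - 1) * ρ := by
  have : 1 + ((I : ℝ) - 1) * ρ = (1 - ρ) + I * ρ := by ring
  rw [this]
  exact add_pos_of_pos_of_nonneg (by linarith) (by positivity)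

variable (I S) in
lemma chiFun_zero : chiFun I S 0 = 1 := by
  simp [chiFun]

variable (I S) in
lemma continuousAt_chiFun_zero : ContinuousAt (chiFun I S) 0 := by
  unfold chiFun
  fun_prop (disch := norm_num)

lemma chiFun_eq_exp_logChi (hI : 1 ≤ I) (h0 : 0 ≤ ρ) (h1 : ρ < 1) :
    chiFun I S ρ = exp (logChi I S ρ) := by
  have hb := one_add_pred_mul_pos I h0 h1
  have h1' : 0 < 1 - ρ := by linarith
  rw [chiFun, rpow_def_of_pos (by positivity), log_mul hb.ne' (by positivity), log_pow,
    ← exp_add, Nat.cast_sub hI, logChi]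
  congr 1
  push_cast
  ring

variable (I S) in
lemma hasDerivAt_logChi (hb : 1 + ((I : ℝ) - 1) * ρ ≠ 0) (hρ : ρ ≠ 1) :
    HasDerivAt (logChi I S)
      (I / (2 * (1 - ρ) ^ 2 * (1 + ((I : ℝ) - 1) * ρ)) * chiQuad I S ρ) ρ := by
  have h1' : 1 - ρ ≠ 0 := sub_ne_zero.2 hρ.symm
  have hlin : HasDerivAt (fun t : ℝ => 1 + ((I : ℝ) - 1) * t) ((I : ℝ) - 1) ρ := by
    simpa using ((hasDerivAt_id ρ).const_mul ((I : ℝ) - 1)).const_add 1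
  have hsub : HasDerivAt (fun t : ℝ => 1 - t) (-1) ρ := by
    simpa using (hasDerivAt_id ρ).const_sub 1
  have hfrac : HasDerivAt (fun t : ℝ => I * S * t / (2 * (1 - t))) _ ρ :=
    ((hasDerivAt_id ρ).const_mul ((I : ℝ) * S)).div (hsub.const_mul 2) (by simpa using h1')
  refine (((hlin.log hb).const_mul (-(1 / 2))).sub
    ((hsub.log h1').const_mul (((I : ℝ) - 1) / 2)) |>.sub hfrac).congr_deriv ?_
  simp only [chiQuad, id]
  field_simp
  ring

lemma monotoneOn_logChi (hx : 0 ≤ x) (hy : y < 1) (hq : ∀ t ∈ Ioo x y, 0 ≤ chiQuad I S t) :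
    MonotoneOn (logChi I S) (Icc x y) := by
  have hd (t) (ht : t ∈ Icc x y) := hasDerivAt_logChi I S
    (one_add_pred_mul_pos I (hx.trans ht.1) (ht.2.trans_lt hy)).ne' (ht.2.trans_lt hy).ne
  refine monotoneOn_of_hasDerivWithinAt_nonneg (convex_Icc x y)
    (fun t ht => (hd t ht).continuousAt.continuousWithinAt)
    (fun t ht => (hd t (interior_subset ht)).hasDerivWithinAt) fun t ht => ?_
  rw [interior_Icc] at ht
  have := one_add_pred_mul_pos I (hx.trans ht.1.le) (ht.2.trans hy)
  exact mul_nonneg (by positivity) (hq t ht)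

lemma antitoneOn_logChi (hx : 0 ≤ x) (hy : y < 1) (hq : ∀ t ∈ Ioo x y, chiQuad I S t ≤ 0) :
    AntitoneOn (logChi I S) (Icc x y) := by
  have hd (t) (ht : t ∈ Icc x y) := hasDerivAt_logChi I S
    (one_add_pred_mul_pos I (hx.trans ht.1) (ht.2.trans_lt hy)).ne' (ht.2.trans_lt hy).ne
  refine antitoneOn_of_hasDerivWithinAt_nonpos (convex_Icc x y)
    (fun t ht => (hd t ht).continuousAt.continuousWithinAt)
    (fun t ht => (hd t (interior_subset ht)).hasDerivWithinAt) fun t ht => ?_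
  rw [interior_Icc] at ht
  have := one_add_pred_mul_pos I (hx.trans ht.1.le) (ht.2.trans hy)
  exact mul_nonpos_of_nonneg_of_nonpos (by positivity) (hq t ht)

lemma eqOn_exp_logChi_chiFun (hI : 1 ≤ I) (hx : 0 ≤ x) (hy : y < 1) :
    EqOn (exp ∘ logChi I S) (chiFun I S) (Icc x y) := fun _ ht =>
  (chiFun_eq_exp_logChi hI (hx.trans ht.1) (ht.2.trans_lt hy)).symm

lemma monotoneOn_chiFun (hI : 1 ≤ I) (hx : 0 ≤ x) (hy : y < 1)
    (hq : ∀ t ∈ Ioo x y, 0 ≤ chiQuad I S t) : MonotoneOn (chiFun I S) (Icc x y) :=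
  (exp_monotone.comp_monotoneOn (monotoneOn_logChi hx hy hq)).congr
    (eqOn_exp_logChi_chiFun hI hx hy)

lemma antitoneOn_chiFun (hI : 1 ≤ I) (hx : 0 ≤ x) (hy : y < 1)
    (hq : ∀ t ∈ Ioo x y, chiQuad I S t ≤ 0) : AntitoneOn (chiFun I S) (Icc x y) :=
  (exp_monotone.comp_antitoneOn (antitoneOn_logChi hx hy hq)).congr
    (eqOn_exp_logChi_chiFun hI hx hy)

variable (I S) in
lemma one_mem_closure_chiFun_image :
    (1 : ℝ) ∈ closure (chiFun I S '' Ioo 0 1) := by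
  have h0 : (0 : ℝ) ∈ closure (Ioo 0 1) := by
    rw [closure_Ioo zero_ne_one]
    exact left_mem_Icc.2 zero_le_one
  simpa only [chiFun_zero] using
    (continuousAt_chiFun_zero I S).continuousWithinAt.mem_closure_image h0

lemma chiFun_le_max_of_eq_neg_mul (hI : 1 ≤ I) (h₁ : 0 ≤ ρ₁) (h₁₂ : ρ₁ ≤ ρ₂)
    (h₂ : ρ₂ < 1) (hfac : ∀ t, chiQuad I S t = -((I : ℝ) - 1) * (t - ρ₁) * (t - ρ₂))
    (hρ : ρ ∈ Ico 0 1) : chiFun I S ρ ≤ max (chiFun I S 0) (chiFun I S ρ₂) := by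
  have hI' : (0 : ℝ) ≤ I - 1 := sub_nonneg.2 (Nat.one_le_cast.2 hI)
  refine le_max_of_antitoneOn_of_monotoneOn_of_antitoneOn (b := ρ₁) (d := ρ)
    (antitoneOn_chiFun hI le_rfl (h₁₂.trans_lt h₂) fun t ht => ?_)
    (monotoneOn_chiFun hI h₁ h₂ fun t ht => ?_)
    (antitoneOn_chiFun hI (h₁.trans h₁₂) hρ.2 fun t ht => ?_) ⟨hρ.1, le_rfl⟩ <;> rw [hfac]
  · linarith [mul_nonneg hI' (mul_nonneg (sub_nonneg.2 ht.2.le) (by linarith [ht.2] : 0 ≤ ρ₂ - t))]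
  · linarith [mul_nonneg hI' (mul_nonneg (sub_nonneg.2 ht.1.le) (sub_nonneg.2 ht.2.le))]
  · linarith [mul_nonneg hI' (mul_nonneg (by linarith [ht.1] : 0 ≤ t - ρ₁) (sub_nonneg.2 ht.1.le))]

end

theorem sup_chi_eq (I : ℕ) (hI : 2 ≤ I) (S : ℝ) (hS : 0 < S) :
    ((Real.sqrt I - 1) / (Real.sqrt I + 1) ≤ S →
      sSup (chiFun I S '' Ioo (0 : ℝ) 1) = 1) ∧
    (S < (Real.sqrt I - 1) / (Real.sqrt I + 1) →
      rhoHat I S ∈ Ioo (0 : ℝ) 1 ∧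
        sSup (chiFun I S '' Ioo (0 : ℝ) 1) = max (chiFun I S (rhoHat I S)) 1) := by
  have hI₁ : 1 ≤ I := one_le_two.trans hI
  constructor
  · intro hT
    refine csSup_eq_of_mem_upperBounds_of_mem_closure (forall_mem_image.2 fun ρ hρ => ?_)
      (one_mem_closure_chiFun_image I S)
    rw [← chiFun_zero I S]
    exact antitoneOn_chiFun hI₁ le_rfl hρ.2
      (fun t ht => chiQuad_nonpos_of_threshold_le hI₁ hT ht.1.le)
      ⟨le_rfl, hρ.1.le⟩ ⟨hρ.1.le, le_rfl⟩ hρ.1.le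
  · intro hT
    obtain ⟨ρ₁, h₁, h₁₂, h₂, hfac⟩ := exists_chiQuad_eq_neg_mul_rhoHat hS
      (hT.trans (threshold_lt_one I)) (chiDisc_pos_of_lt_threshold hI₁ hT)
    have hmem : rhoHat I S ∈ Ioo (0 : ℝ) 1 := ⟨h₁.trans_le h₁₂, h₂⟩
    refine ⟨hmem, csSup_eq_of_mem_upperBounds_of_mem_closure
      (forall_mem_image.2 fun ρ hρ => ?_) ?_⟩
    · rw [max_comm, ← chiFun_zero I S]
      exact chiFun_le_max_of_eq_neg_mul hI₁ h₁.le h₁₂ h₂ hfac (Ioo_subset_Ico_self hρ)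
    · rcases max_choice (chiFun I S (rhoHat I S)) 1 with h | h <;> rw [h]
      · exact subset_closure (mem_image_of_mem _ hmem)
      · exact one_mem_closure_chiFun_image I S
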